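/- Let d ≥ 1, M ≥ 1, let I_1,…,I_d and R_1,…,R_{d+1} be positive integers, and for each sample index m ∈ {1,…,M} and each mode i ∈ {1,…,d} let X_m^{(i)} ∈ ℝ^{R_i × I_i × R_{i+1}} be the i-th TT-core of the m-th sample (all samples having the same TT-ranks R_1,…,R_{d+1}). For each mode i let k_i : ℝ^{I_i} × ℝ^{I_i} → ℝ be a positive semidefinite kernel. Define the K-STTM-Prod kernel matrix G ∈ ℝ^{M×M} by G(a,b) = Σ_{r ∈ ∏_{i=1}^{d+1}{1,…,R_i}} Σ_{r̂ ∈ ∏_{i=1}^{d+1}{1,…,R_i}} ∏_{i=1}^{d} k_i( X_a^{(i)}(r_i,·,r_{i+1}), X_b^{(i)}(r̂_i,·,r̂_{i+1}) ). Then G is a symmetric positive semidefinite matrix. -/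

import Mathlib

/-!
On the index set of pairs `(m, r)` of a sample and a tuple of TT-rank indices, the matrix
`K((m, r), (m', r')) = ∏ i, k i (X_m^{(i)}(r_i,·,r_{i+1})) (X_{m'}^{(i)}(r'_i,·,r'_{i+1}))`
is a Hadamard product of `d` kernel Gram matrices, hence positive semidefinite by the Schur
product theorem. The K-STTM-Prod matrix sums the `(m, m')` blocks of `K`, so it equals `B K Bᴴ`
for the 0/1 matrix `B` that forgets the rank indices.
-/

open Matrix
open scoped ComplexOrder

namespace Matrix

theorem posSemidef_prod_hadamard {𝕜 ι n : Type*} [RCLike 𝕜] [Finite n]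
    {A : ι → Matrix n n 𝕜} (s : Finset ι) (hA : ∀ i ∈ s, (A i).PosSemidef) :
    (of fun p q => ∏ i ∈ s, A i p q).PosSemidef := by
  classical
  induction s using Finset.induction_on with
  | empty => simpa [vecMulVec] using posSemidef_vecMulVec_self_star (1 : n → 𝕜)
  | insert i s hi ih =>
    simp_rw [Finset.prod_insert hi]
    exact (hA i (s.mem_insert_self i)).hadamard
      (ih fun j hj => hA j (Finset.mem_insert_of_mem hj))

theorem PosSemidef.sum_blocks {R ι κ : Type*} [Ring R] [PartialOrder R] [StarRing R]
    [Fintype ι] [Fintype κ] {K : Matrix (ι × κ) (ι × κ) R} (hK : K.PosSemidef) :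
    (of fun a b => ∑ r, ∑ r', K (a, r) (b, r')).PosSemidef := by
  classical
  let B : Matrix ι (ι × κ) R := of fun a p => (1 : Matrix ι ι R) a p.1
  convert hK.mul_mul_conjTranspose_same B using 1
  ext a b
  -- `Prod.fst` must be reduced before `one_apply` fires, or the `Decidable` instance keeps it.
  simp only [B, mul_apply, conjTranspose_apply, of_apply, Fintype.sum_prod_type]
  rw [Finset.sum_comm]
  simp [one_apply, apply_ite star]

theorem posSemidef_gram_of_forall_fin {R α ι : Type*} [Ring R] [PartialOrder R] [StarRing R]
    [Finite ι] {k : α → α → R}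
    (hk : ∀ (m : ℕ) (v : Fin m → α), (of fun a b => k (v a) (v b)).PosSemidef) (v : ι → α) :
    (of fun a b => k (v a) (v b)).PosSemidef := by
  have := Fintype.ofFinite ι
  let e := Fintype.equivFin ι
  convert (hk _ (v ∘ e.symm)).submatrix e using 1
  ext a b
  simp

end Matrix

theorem ksttm_prod_kernel_posSemidef_general
    (d M : ℕ)
    (I : Fin d → ℕ) (R : Fin (d + 1) → ℕ)
    (X : Fin M → (i : Fin d) → Fin (R i.castSucc) → Fin (I i) → Fin (R i.succ) → ℝ)
    (k : (i : Fin d) → (Fin (I i) → ℝ) → (Fin (I i) → ℝ) → ℝ)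
    (hpsd : ∀ (i : Fin d) (m : ℕ) (v : Fin m → (Fin (I i) → ℝ)),
      (Matrix.of fun a b : Fin m => k i (v a) (v b)).PosSemidef) :
    (Matrix.of fun a b : Fin M =>
      ∑ r : (j : Fin (d + 1)) → Fin (R j), ∑ r' : (j : Fin (d + 1)) → Fin (R j),
        ∏ i : Fin d,
          k i (fun j => X a i (r i.castSucc) j (r i.succ))
              (fun j => X b i (r' i.castSucc) j (r' i.succ))).PosSemidef := by
  let fiber (i : Fin d) (p : Fin M × ((j : Fin (d + 1)) → Fin (R j))) : Fin (I i) → ℝ :=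
    fun j => X p.1 i (p.2 i.castSucc) j (p.2 i.succ)
  have hprod : (of fun p q => ∏ i, k i (fiber i p) (fiber i q)).PosSemidef :=
    posSemidef_prod_hadamard _ fun i _ => posSemidef_gram_of_forall_fin (hpsd i) (fiber i)
  exact hprod.sum_blocks

/-- **K-STTM-Prod kernel validity.**
Given `M` samples, each represented as a tensor train with cores
`X m i : Fin (R i.castSucc) → Fin (I i) → Fin (R i.succ) → ℝ` (all samples sharing the same
TT-ranks `R`), and given for each mode `i` a positive semidefinite kernel
`k i : (Fin (I i) → ℝ) → (Fin (I i) → ℝ) → ℝ` (symmetric, with PSD Gram matrices on every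
finite family), the K-STTM-Prod kernel matrix
`G a b = ∑_{r, r̂} ∏_i k i (X a i (r_i, ·, r_{i+1})) (X b i (r̂_i, ·, r̂_{i+1}))`
is a (symmetric) positive semidefinite matrix. -/
theorem ksttm_prod_kernel_posSemidef
    (d M : ℕ) (hd : 1 ≤ d) (hM : 1 ≤ M)
    (I : Fin d → ℕ) (R : Fin (d + 1) → ℕ)
    (hI : ∀ i, 1 ≤ I i) (hR : ∀ i, 1 ≤ R i)
    (X : Fin M → (i : Fin d) → Fin (R i.castSucc) → Fin (I i) → Fin (R i.succ) → ℝ)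
    (k : (i : Fin d) → (Fin (I i) → ℝ) → (Fin (I i) → ℝ) → ℝ)
    (hsymm : ∀ (i : Fin d) (x y : Fin (I i) → ℝ), k i x y = k i y x)
    (hpsd : ∀ (i : Fin d) (m : ℕ) (v : Fin m → (Fin (I i) → ℝ)),
      (Matrix.of fun a b : Fin m => k i (v a) (v b)).PosSemidef) :
    (Matrix.of fun a b : Fin M =>
      ∑ r : (j : Fin (d + 1)) → Fin (R j), ∑ r' : (j : Fin (d + 1)) → Fin (R j),
        ∏ i : Fin d,
          k i (fun j => X a i (r i.castSucc) j (r i.succ))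
              (fun j => X b i (r' i.castSucc) j (r' i.succ))).PosSemidef :=
  ksttm_prod_kernel_posSemidef_general d M I R X k hpsd
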